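/- arXiv:2312.17390 — 2 statements merged into one kernel-verified Lean document; each statement's English description precedes it below -/
import Mathlib

section
/- If Z, w are complex numbers with |w| = 1 and |Z − w| < √3/2, then Z ≠ 0 and the angular distance between arg Z and arg w is less than π/3, i.e., there exists an integer k with |arg Z − arg w + 2πk| < π/3. -/
/-!
Dividing by `w` reduces everything to `u = Z / w`, which satisfies `‖u - 1‖ < √3 / 2` and whose
argument agrees with `arg2 Z - arg2 w` modulo `2π`. Expanding `‖u - 1‖² < 3 / 4` and using
`‖u‖ ≤ ‖u‖² + 1 / 4` gives `‖u‖ < 2 Re u`, i.e. `cos (arg u) > 1 / 2`, hence `|arg u| < π / 3`.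
-/

open Real Complex

theorem Complex.norm_lt_two_mul_re_of_norm_sub_one_lt {u : ℂ} (h : ‖u - 1‖ < √3 / 2) :
    ‖u‖ < 2 * u.re := by
  have hsq : ‖u - 1‖ ^ 2 < 3 / 4 := by
    calc ‖u - 1‖ ^ 2 < (√3 / 2) ^ 2 := by gcongr
      _ = 3 / 4 := by rw [div_pow, sq_sqrt zero_le_three]; norm_num
  have hexpand : ‖u - 1‖ ^ 2 = ‖u‖ ^ 2 - 2 * u.re + 1 := by
    rw [Complex.sq_norm, Complex.sq_norm, normSq_sub, normSq_one]
    simp only [map_one, mul_one]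
    ring
  nlinarith [sq_nonneg (‖u‖ - 1 / 2)]

theorem Complex.abs_arg_lt_pi_div_three_of_norm_lt_two_mul_re {u : ℂ} (h : ‖u‖ < 2 * u.re) :
    |arg u| < π / 3 := by
  have hu : u ≠ 0 := by rintro rfl; simp at h
  have hcos : Real.cos (π / 3) < Real.cos |arg u| := by
    rw [Real.cos_pi_div_three, Real.cos_abs, cos_arg hu, lt_div_iff₀ (norm_pos_iff.mpr hu)]
    linarith
  have hmem : π / 3 ∈ Set.Icc 0 π := ⟨by positivity, by linarith [pi_pos]⟩
  exact (Real.strictAntiOn_cos.lt_iff_gt hmem ⟨abs_nonneg _, abs_arg_le_pi u⟩).mp hcos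

theorem Complex.coe_arg_eq_of_eq_norm_mul_exp {z : ℂ} {θ : ℝ} (hz : z ≠ 0)
    (h : z = ‖z‖ * exp (I * θ)) : (arg z : Real.Angle) = θ := by
  rw [h, mul_comm I, exp_mul_I, ← ofReal_cos, ← ofReal_sin, ← Real.Angle.cos_coe,
    ← Real.Angle.sin_coe]
  exact arg_mul_cos_add_sin_mul_I_coe_angle (norm_pos_iff.mpr hz) θ

/-- Key geometric lemma of robust phase estimation.  `arg2` is a fixed choice of
argument in `[0, 2π)`.  If `|w| = 1` and `|Z − w| < √3/2`, then `Z ≠ 0` and the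
angular distance between `arg2 Z` and `arg2 w` is less than `π/3`. -/
theorem arg_close_of_close_to_circle
    (arg2 : ℂ → ℝ)
    (harg2 : ∀ z : ℂ, z ≠ 0 → 0 ≤ arg2 z ∧ arg2 z < 2 * π ∧
      z = (‖z‖ : ℂ) * Complex.exp (Complex.I * (arg2 z)))
    (Z w : ℂ) (hw : ‖w‖ = 1) (hZw : ‖Z - w‖ < Real.sqrt 3 / 2) :
    Z ≠ 0 ∧ ∃ k : ℤ, |arg2 Z - arg2 w + 2 * π * k| < π / 3 := by
  have hw0 : w ≠ 0 := by rintro rfl; simp at hw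
  have hclose : ‖Z / w - 1‖ < √3 / 2 := by
    rwa [← div_self hw0, ← sub_div, norm_div, hw, div_one]
  have hre := norm_lt_two_mul_re_of_norm_sub_one_lt hclose
  have hZ0 : Z ≠ 0 := by rintro rfl; simp at hre
  refine ⟨hZ0, ?_⟩
  have hangle : ((arg2 Z - arg2 w : ℝ) : Real.Angle) = arg (Z / w) := by
    rw [arg_div_coe_angle hZ0 hw0, coe_arg_eq_of_eq_norm_mul_exp hZ0 (harg2 Z hZ0).2.2,
      coe_arg_eq_of_eq_norm_mul_exp hw0 (harg2 w hw0).2.2, Real.Angle.coe_sub]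
  obtain ⟨k, hk⟩ := Real.Angle.angle_eq_iff_two_pi_dvd_sub.mp hangle
  refine ⟨-k, ?_⟩
  rw [Int.cast_neg, mul_neg, ← sub_eq_add_neg, ← hk, sub_sub_cancel]
  exact abs_arg_lt_pi_div_three_of_norm_lt_two_mul_re hre
end

section
/- Let H be a Hermitian operator on a finite-dimensional Hilbert space and U a random unitary with H_eff = 𝔼[U† H U]. For r ≥ 1 and τ = t/r, with U₁, …, U_r i.i.d. copies of U, the expected conjugated product satisfies ‖𝔼[∏_{l=1}^{r} (U_l† e^{-iHτ} U_l)] − e^{-i H_eff t}‖ ≤ C t²/r, where C depends only on ‖H‖ (e.g., C = ‖H‖² e^{‖H‖ t /r} works, and in particular C = 2‖H‖² suffices when r ≥ ‖H‖ t). -/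
open MeasureTheory NormedSpace Complex

open scoped Nat

/-!
Conjugation by a unitary commutes with `exp`, so the `l`-th factor is `exp (c • X (ω l))` with
`X = U† H U` and `c = -iτ`; since the factors depend on independent coordinates, Fubini turns the
expectation of the ordered product into `A ^ r`, where `A = 𝔼[exp (c • X)]`. Both `A` and
`B = exp (c • H_eff)` agree with `1 + c • H_eff` up to the second-order remainder `e^m - 1 - m`,
`m = τ‖H‖`, and both are contractions (an average of unitaries, resp. a unitary), so
`‖A ^ r - B ^ r‖ ≤ r ‖A - B‖ ≤ 2 r (e^m - 1 - m)`. The two bounds then follow from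
`e^m - 1 - m ≤ m² e^m / 2`, and `e^m - 1 - m ≤ m²` for `m ≤ 1`.
-/

section ExpRemainder
variable {𝔸 : Type*} [NormedRing 𝔸] [NormedAlgebra ℝ 𝔸] [CompleteSpace 𝔸]

theorem NormedSpace.exp_sub_one_sub_eq_tsum (x : 𝔸) :
    exp x - 1 - x = ∑' n : ℕ, ((n + 2)!⁻¹ : ℝ) • x ^ (n + 2) := by
  have hs : Summable fun n : ℕ => ((n !)⁻¹ : ℝ) • x ^ n := expSeries_summable' x
  rw [congrFun (exp_eq_tsum ℝ) x, hs.tsum_eq_zero_add,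
    ((summable_nat_add_iff 1).2 hs).tsum_eq_zero_add]
  simp only [Nat.factorial_zero, Nat.cast_one, inv_one, pow_zero, one_smul, zero_add,
    Nat.factorial_one, pow_one]
  abel

theorem norm_exp_sub_one_sub_le {x : 𝔸} {m : ℝ} (hx : ‖x‖ ≤ m) :
    ‖exp x - 1 - x‖ ≤ Real.exp m - 1 - m := by
  have hsm : Summable fun n : ℕ => ((n + 2)!⁻¹ : ℝ) • m ^ (n + 2) :=
    (summable_nat_add_iff 2).2 (expSeries_summable' (𝕂 := ℝ) m)
  have hsx : Summable fun n : ℕ => ‖((n + 2)!⁻¹ : ℝ) • x ^ (n + 2)‖ :=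
    (summable_nat_add_iff 2).2 (norm_expSeries_summable' (𝕂 := ℝ) x)
  rw [Real.exp_eq_exp_ℝ, exp_sub_one_sub_eq_tsum, exp_sub_one_sub_eq_tsum]
  refine (norm_tsum_le_tsum_norm hsx).trans (hsx.tsum_le_tsum (fun n => ?_) hsm)
  rw [norm_smul, smul_eq_mul, Real.norm_of_nonneg (by positivity)]
  gcongr
  exact (norm_pow_le' x (by omega)).trans (pow_le_pow_left₀ (norm_nonneg x) hx _)

end ExpRemainder

theorem Real.exp_sub_one_sub_le_sq_div_two_mul_exp {x : ℝ} (hx : 0 ≤ x) :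
    Real.exp x - 1 - x ≤ x ^ 2 / 2 * Real.exp x := by
  rw [Real.exp_eq_exp_ℝ, exp_sub_one_sub_eq_tsum, exp_eq_tsum_div, ← tsum_mul_left]
  refine ((summable_nat_add_iff 2).2 (expSeries_summable' (𝕂 := ℝ) x)).tsum_le_tsum
    (fun n => ?_) ((Real.summable_pow_div_factorial x).mul_left _)
  have hfac : (2 * n ! : ℝ) ≤ (n + 2)! := by
    exact_mod_cast Nat.mul_le_mul (by omega : 2 ≤ n + 2) (Nat.factorial_le n.le_succ)
  rw [smul_eq_mul, inv_mul_eq_div, show x ^ 2 / 2 * (x ^ n / n !) = x ^ (n + 2) / (2 * n !) by ring]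
  gcongr

theorem norm_pow_sub_pow_le_of_norm_le_one {R : Type*} [SeminormedRing R] {a b : R}
    (ha : ‖a‖ ≤ 1) (hb : ‖b‖ ≤ 1) : ∀ r : ℕ, ‖a ^ r - b ^ r‖ ≤ r * ‖a - b‖
  | 0 => by simp
  | r + 1 => by
    -- start at `r = 1`: `‖b ^ 0‖ = ‖1‖` may exceed `1` in a seminormed ring
    induction r with
    | zero => simp
    | succ k ih =>
      have hbk : ‖b ^ (k + 1)‖ ≤ 1 :=
        (norm_pow_le' b k.succ_pos).trans (pow_le_one₀ (norm_nonneg b) hb)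
      calc ‖a ^ (k + 2) - b ^ (k + 2)‖
          = ‖a * (a ^ (k + 1) - b ^ (k + 1)) + (a - b) * b ^ (k + 1)‖ := by
            congr 1; rw [pow_succ' a (k + 1), pow_succ' b (k + 1)]; noncomm_ring
        _ ≤ ‖a‖ * ‖a ^ (k + 1) - b ^ (k + 1)‖ + ‖a - b‖ * ‖b ^ (k + 1)‖ :=
            (norm_add_le _ _).trans (add_le_add (norm_mul_le _ _) (norm_mul_le _ _))
        _ ≤ 1 * ((k + 1 : ℕ) * ‖a - b‖) + ‖a - b‖ * 1 := by gcongr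
        _ = (k + 2 : ℕ) * ‖a - b‖ := by push_cast; ring

section IidProduct
variable {Ω : Type*} [MeasurableSpace Ω]

theorem list_ofFn_prod_piFinSuccAbove_symm {M : Type*} [Monoid M] (g : Ω → M) {r : ℕ}
    (p : Ω × (Fin r → Ω)) :
    (List.ofFn fun l =>
        g ((MeasurableEquiv.piFinSuccAbove (fun _ : Fin (r + 1) => Ω) 0).symm p l)).prod
      = g p.1 * (List.ofFn fun l => g (p.2 l)).prod := by
  simp [MeasurableEquiv.piFinSuccAbove_symm_apply, Fin.insertNthEquiv, List.ofFn_succ]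

variable {A : Type*} [NormedRing A] {μ : Measure Ω} [SigmaFinite μ] {g : Ω → A}

theorem MeasureTheory.Integrable.list_ofFn_prod_pi (hg : Integrable g μ) :
    ∀ r : ℕ, Integrable (fun x : Fin r → Ω => (List.ofFn fun l => g (x l)).prod)
      (Measure.pi fun _ => μ)
  | 0 => by rw [Measure.pi_of_empty]; exact integrable_const _
  | r + 1 => by
    rw [← (measurePreserving_piFinSuccAbove (fun _ : Fin (r + 1) => μ) 0).symm.integrable_comp_emb
      (MeasurableEquiv.measurableEmbedding _)]
    simp only [Function.comp_def, list_ofFn_prod_piFinSuccAbove_symm]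
    exact hg.op_fst_snd continuous_mul ⟨1, fun x y => by simpa using norm_mul_le x y⟩
      (hg.list_ofFn_prod_pi r)

variable [NormedAlgebra ℝ A] [CompleteSpace A] in
theorem integral_list_ofFn_prod_pi (hg : Integrable g μ) :
    ∀ r : ℕ, ∫ x : Fin r → Ω, (List.ofFn fun l => g (x l)).prod ∂(Measure.pi fun _ => μ)
      = (∫ ω, g ω ∂μ) ^ r
  | 0 => by simp [Measure.pi_of_empty (fun _ : Fin 0 => μ)]
  | r + 1 => by
    have hfubini := integral_prod_bilin (ContinuousLinearMap.mul ℝ A) hg (hg.list_ofFn_prod_pi r)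
    simp only [ContinuousLinearMap.mul_apply'] at hfubini
    rw [← (measurePreserving_piFinSuccAbove (fun _ : Fin (r + 1) => μ) 0).symm.integral_comp']
    simp only [list_ofFn_prod_piFinSuccAbove_symm]
    rw [hfubini, integral_list_ofFn_prod_pi hg r, pow_succ']

end IidProduct

section OneStep
variable {Ω : Type*} [MeasurableSpace Ω] {μ : Measure Ω} [IsProbabilityMeasure μ]
  {𝔸 : Type*} [NormedRing 𝔸] [NormedAlgebra ℝ 𝔸] [CompleteSpace 𝔸] {X : Ω → 𝔸} {m : ℝ}

theorem integrable_exp_sub_one_sub_of_norm_le (hX : AEStronglyMeasurable X μ)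
    (hm : ∀ ω, ‖X ω‖ ≤ m) : Integrable (fun ω => exp (X ω) - 1 - X ω) μ := by
  let _ : NormedAlgebra ℚ 𝔸 := NormedAlgebra.restrictScalars ℚ ℝ 𝔸
  exact .of_bound (((exp_continuous.comp_aestronglyMeasurable hX).sub
    aestronglyMeasurable_const).sub hX) _ (ae_of_all _ fun ω => norm_exp_sub_one_sub_le (hm ω))

theorem integrable_exp_of_norm_le (hX : AEStronglyMeasurable X μ) (hm : ∀ ω, ‖X ω‖ ≤ m) :
    Integrable (fun ω => exp (X ω)) μ := by
  have hsum := ((integrable_exp_sub_one_sub_of_norm_le hX hm).add (integrable_const 1)).add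
    (.of_bound hX m (ae_of_all _ hm))
  exact hsum.congr (ae_of_all _ fun ω => by simp only [Pi.add_apply]; abel)

theorem norm_integral_exp_sub_exp_integral_le (hX : AEStronglyMeasurable X μ)
    (hm : ∀ ω, ‖X ω‖ ≤ m) :
    ‖∫ ω, exp (X ω) ∂μ - exp (∫ ω, X ω ∂μ)‖ ≤ 2 * (Real.exp m - 1 - m) := by
  have hmean : ‖∫ ω, X ω ∂μ‖ ≤ m := by
    simpa using norm_integral_le_of_norm_le_const (ae_of_all μ hm)
  have hrem : ‖∫ ω, (exp (X ω) - 1 - X ω) ∂μ‖ ≤ Real.exp m - 1 - m := by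
    simpa using norm_integral_le_of_norm_le_const
      (ae_of_all μ fun ω => norm_exp_sub_one_sub_le (hm ω))
  have hsplit : ∫ ω, (exp (X ω) - 1 - X ω) ∂μ = ∫ ω, exp (X ω) ∂μ - 1 - ∫ ω, X ω ∂μ := by
    have hexp := integrable_exp_of_norm_le hX hm
    have hexp1 : Integrable (fun ω => exp (X ω) - 1) μ := hexp.sub (integrable_const 1)
    rw [integral_sub hexp1 (.of_bound hX m (ae_of_all _ hm)),
      integral_sub hexp (integrable_const 1), integral_const, probReal_univ, one_smul]
  calc ‖∫ ω, exp (X ω) ∂μ - exp (∫ ω, X ω ∂μ)‖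
      = ‖∫ ω, (exp (X ω) - 1 - X ω) ∂μ - (exp (∫ ω, X ω ∂μ) - 1 - ∫ ω, X ω ∂μ)‖ := by
        rw [hsplit]; abel_nf
    _ ≤ (Real.exp m - 1 - m) + (Real.exp m - 1 - m) :=
        (norm_sub_le _ _).trans (add_le_add hrem (norm_exp_sub_one_sub_le hmean))
    _ = 2 * (Real.exp m - 1 - m) := by ring

end OneStep

theorem NormedSpace.exp_div_smul_pow {𝔸 : Type*} [NormedRing 𝔸] [NormedAlgebra ℂ 𝔸]
    [CompleteSpace 𝔸] (z : ℂ) {r : ℕ} (hr : r ≠ 0) (x : 𝔸) :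
    exp ((z / r) • x) ^ r = exp (z • x) := by
  let _ : NormedAlgebra ℚ 𝔸 := NormedAlgebra.restrictScalars ℚ ℂ 𝔸
  rw [← NormedSpace.exp_nsmul, ← Nat.cast_smul_eq_nsmul ℂ, smul_smul,
    mul_div_cancel₀ _ (Nat.cast_ne_zero.2 hr)]

theorem star_integral {Ω E : Type*} [MeasurableSpace Ω] {μ : Measure Ω} [NormedAddCommGroup E]
    [NormedSpace ℝ E] [StarAddMonoid E] [StarModule ℝ E] [ContinuousStar E] (f : Ω → E) :
    star (∫ ω, f ω ∂μ) = ∫ ω, star (f ω) ∂μ :=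
  ((starL' ℝ : E ≃L[ℝ] E).integral_comp_comm f).symm

theorem CStarRing.norm_le_one_of_mem_unitary {A : Type*} [NormedRing A] [StarRing A]
    [CStarRing A] {u : A} (hu : u ∈ unitary A) : ‖u‖ ≤ 1 := by
  nontriviality A
  exact (norm_of_mem_unitary hu).le

section CStarAlgebra
variable {A : Type*} [CStarAlgebra A]

theorem norm_exp_le_one_of_mem_skewAdjoint {x : A} (hx : x ∈ skewAdjoint A) : ‖exp x‖ ≤ 1 := by
  let _ : NormedAlgebra ℚ A := NormedAlgebra.restrictScalars ℚ ℂ A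
  exact CStarRing.norm_le_one_of_mem_unitary (exp_mem_unitary_of_mem_skewAdjoint hx)

theorem star_mul_exp_mul_of_mem_unitary {u : A} (hu : u ∈ unitary A) (x : A) :
    star u * exp x * u = exp (star u * x * u) := by
  let _ : NormedAlgebra ℚ A := NormedAlgebra.restrictScalars ℚ ℂ A
  simpa [← Unitary.star_eq_inv, Unitary.coe_star] using
    (exp_units_conj' (Unitary.toUnits ⟨u, hu⟩) x).symm

variable {Ω : Type*} [MeasurableSpace Ω] {μ : Measure Ω}

theorem integral_mem_skewAdjoint {f : Ω → A} (hf : ∀ ω, f ω ∈ skewAdjoint A) :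
    ∫ ω, f ω ∂μ ∈ skewAdjoint A := by
  rw [skewAdjoint.mem_iff, star_integral, ← integral_neg]
  exact integral_congr_ae (ae_of_all _ fun ω => skewAdjoint.mem_iff.1 (hf ω))

theorem norm_integral_list_ofFn_prod_conj_exp_sub_exp_pow_le [IsProbabilityMeasure μ] {K : A}
    (hK : K ∈ skewAdjoint A) {U : Ω → A} (hU : ∀ ω, U ω ∈ unitary A)
    (hX : AEStronglyMeasurable (fun ω => star (U ω) * K * U ω) μ) (r : ℕ) :
    ‖∫ x : Fin r → Ω, (List.ofFn fun l => star (U (x l)) * exp K * U (x l)).prod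
        ∂(Measure.pi fun _ => μ) - exp (∫ ω, star (U ω) * K * U ω ∂μ) ^ r‖
      ≤ r * (2 * (Real.exp ‖K‖ - 1 - ‖K‖)) := by
  have hnorm : ∀ ω, ‖star (U ω) * K * U ω‖ ≤ ‖K‖ := fun ω => by
    rw [CStarRing.norm_mul_mem_unitary _ (hU ω),
      CStarRing.norm_mem_unitary_mul _ (Unitary.star_mem (hU ω))]
  have hskew : ∀ ω, star (U ω) * K * U ω ∈ skewAdjoint A := fun ω => skewAdjoint.conjugate' hK _
  have hconj : ∀ ω, star (U ω) * exp K * U ω = exp (star (U ω) * K * U ω) := fun ω =>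
    star_mul_exp_mul_of_mem_unitary (hU ω) K
  simp_rw [hconj]
  rw [integral_list_ofFn_prod_pi (integrable_exp_of_norm_le hX hnorm)]
  refine (norm_pow_sub_pow_le_of_norm_le_one ?_ ?_ r).trans ?_
  · simpa using norm_integral_le_of_norm_le_const
      (ae_of_all μ fun ω => norm_exp_le_one_of_mem_skewAdjoint (hskew ω))
  · exact norm_exp_le_one_of_mem_skewAdjoint (integral_mem_skewAdjoint hskew)
  · gcongr
    exact norm_integral_exp_sub_exp_integral_le hX hnorm

end CStarAlgebra

theorem qdrift_reshaping_error_general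
    (n r : ℕ) (hr : 1 ≤ r) (t : ℝ) (ht : 0 ≤ t)
    {Ω : Type*} [MeasurableSpace Ω] (μ : Measure Ω) [IsProbabilityMeasure μ]
    (H : EuclideanSpace ℂ (Fin n) →L[ℂ] EuclideanSpace ℂ (Fin n))
    (hH : IsSelfAdjoint H)
    (U : Ω → (EuclideanSpace ℂ (Fin n) →L[ℂ] EuclideanSpace ℂ (Fin n)))
    (hU : ∀ ω, U ω ∈ unitary (EuclideanSpace ℂ (Fin n) →L[ℂ] EuclideanSpace ℂ (Fin n)))
    (Heff : EuclideanSpace ℂ (Fin n) →L[ℂ] EuclideanSpace ℂ (Fin n))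
    (hHeff : Heff = ∫ ω, star (U ω) * H * U ω ∂μ)
    (hint : Integrable (fun ω => star (U ω) * H * U ω) μ) :
    ‖(∫ ω : Fin r → Ω,
        (List.ofFn fun l : Fin r =>
          star (U (ω l)) * NormedSpace.exp ((-(Complex.I * ((t : ℂ) / r))) • H) * U (ω l)).prod
          ∂(Measure.pi fun _ => μ)) - NormedSpace.exp ((-(Complex.I * t)) • Heff)‖
        ≤ ‖H‖ ^ 2 * Real.exp (‖H‖ * t / r) * t ^ 2 / r ∧
    (‖H‖ * t ≤ r →
      ‖(∫ ω : Fin r → Ω,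
          (List.ofFn fun l : Fin r =>
            star (U (ω l)) * NormedSpace.exp ((-(Complex.I * ((t : ℂ) / r))) • H) * U (ω l)).prod
            ∂(Measure.pi fun _ => μ)) - NormedSpace.exp ((-(Complex.I * t)) • Heff)‖
          ≤ 2 * ‖H‖ ^ 2 * t ^ 2 / r) := by
  have hr0 : (0 : ℝ) < r := by exact_mod_cast hr
  set c : ℂ := -(Complex.I * ((t : ℂ) / r)) with hc_def
  have hc_real : (t : ℂ) / r = ((t / r : ℝ) : ℂ) := by push_cast; ring
  have hc : c ∈ skewAdjoint ℂ := by rw [skewAdjoint.mem_iff, hc_def, hc_real]; simp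
  have hc_norm : ‖c‖ = t / r := by
    rw [hc_def, hc_real, norm_neg, norm_mul, norm_I, one_mul, norm_real,
      Real.norm_of_nonneg (by positivity)]
  have hconj : (fun ω => star (U ω) * (c • H) * U ω) = fun ω => c • (star (U ω) * H * U ω) := by
    ext1 ω; rw [mul_smul_comm, smul_mul_assoc]
  have hpow : exp (c • Heff) ^ r = exp ((-(I * t)) • Heff) := by
    rw [show c = -(I * t) / r by ring]
    exact NormedSpace.exp_div_smul_pow (-(I * t)) (r := r) (by omega) Heff
  have key := norm_integral_list_ofFn_prod_conj_exp_sub_exp_pow_le (hH.smul_mem_skewAdjoint hc) hU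
    (by rw [hconj]; exact (hint.smul c).aestronglyMeasurable) r
  rw [hconj, integral_smul, ← hHeff, hpow, norm_smul, hc_norm] at key
  have hm : 0 ≤ t / r * ‖H‖ := by positivity
  constructor
  · calc _ ≤ r * (2 * ((t / r * ‖H‖) ^ 2 / 2 * Real.exp (t / r * ‖H‖))) := by
          refine key.trans ?_
          gcongr
          exact Real.exp_sub_one_sub_le_sq_div_two_mul_exp hm
      _ = _ := by rw [mul_comm (t / r)]; field_simp
  · intro hHt
    have hm1 : |t / r * ‖H‖| ≤ 1 := by
      rw [abs_of_nonneg hm, div_mul_eq_mul_div, div_le_one hr0]; linarith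
    calc _ ≤ r * (2 * (t / r * ‖H‖) ^ 2) := by
          refine key.trans ?_
          gcongr
          exact (le_abs_self _).trans (Real.abs_exp_sub_one_sub_id_le hm1)
      _ = _ := by field_simp

/-- qDRIFT-style reshaping error bound.  `H` is Hermitian on a finite-dimensional
Hilbert space, `U` a random unitary with `H_eff = 𝔼[U† H U]`, and `U₁,…,U_r`
i.i.d. copies of `U` (modelled by the product measure).  Then the expectation of the
ordered product `∏ U_l† e^{-iHτ} U_l` (with `τ = t/r`) is within
`‖H‖² e^{‖H‖t/r} · t²/r` of `e^{-iH_eff t}` in operator norm; in particular the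
constant `2‖H‖²` suffices when `r ≥ ‖H‖t`. -/
theorem qdrift_reshaping_error
    (n r : ℕ) (hr : 1 ≤ r) (t : ℝ) (ht : 0 ≤ t)
    {Ω : Type*} [MeasurableSpace Ω] (μ : Measure Ω) [IsProbabilityMeasure μ]
    (H : EuclideanSpace ℂ (Fin n) →L[ℂ] EuclideanSpace ℂ (Fin n))
    (hH : IsSelfAdjoint H)
    (U : Ω → (EuclideanSpace ℂ (Fin n) →L[ℂ] EuclideanSpace ℂ (Fin n)))
    (hU : ∀ ω, U ω ∈ unitary (EuclideanSpace ℂ (Fin n) →L[ℂ] EuclideanSpace ℂ (Fin n)))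
    (Heff : EuclideanSpace ℂ (Fin n) →L[ℂ] EuclideanSpace ℂ (Fin n))
    (hHeff : Heff = ∫ ω, star (U ω) * H * U ω ∂μ)
    (hint : Integrable (fun ω => star (U ω) * H * U ω) μ)
    (hint2 : Integrable
      (fun ω : Fin r → Ω =>
        (List.ofFn fun l : Fin r =>
          star (U (ω l)) * NormedSpace.exp ((-(Complex.I * ((t : ℂ) / r))) • H) * U (ω l)).prod)
      (Measure.pi fun _ => μ)) :
    ‖(∫ ω : Fin r → Ω,
        (List.ofFn fun l : Fin r =>
          star (U (ω l)) * NormedSpace.exp ((-(Complex.I * ((t : ℂ) / r))) • H) * U (ω l)).prod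
          ∂(Measure.pi fun _ => μ)) - NormedSpace.exp ((-(Complex.I * t)) • Heff)‖
        ≤ ‖H‖ ^ 2 * Real.exp (‖H‖ * t / r) * t ^ 2 / r ∧
    (‖H‖ * t ≤ r →
      ‖(∫ ω : Fin r → Ω,
          (List.ofFn fun l : Fin r =>
            star (U (ω l)) * NormedSpace.exp ((-(Complex.I * ((t : ℂ) / r))) • H) * U (ω l)).prod
            ∂(Measure.pi fun _ => μ)) - NormedSpace.exp ((-(Complex.I * t)) • Heff)‖
          ≤ 2 * ‖H‖ ^ 2 * t ^ 2 / r) :=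
  qdrift_reshaping_error_general n r hr t ht μ H hH U hU Heff hHeff hint
end
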